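/- arXiv:2107.11590 — 4 statements merged into one kernel-verified Lean document; each statement's English description precedes it below -/
import Mathlib

section
/- Let n ≥ 2 and α ∈ (n-1, n). Then there is a constant C such that g_α(R) = (1/|S^{n-1}|) ∫_{S^{n-1}} |e_1 - R ω|^{-α} dσ(ω) ≤ C (1-R)^{-α+n-1} for all R ∈ [0,1). -/
open MeasureTheory Real Metric Set
open scoped Pointwise RealInnerProductSpace

/-!
Write `F(ω) = ‖e₁ - R ω‖^(-α)`. Since `‖e₁ - R ω‖² ≥ (1 - ω₁) / 4`, the superlevel set
`{F ≥ t}` lies in the cap `{1 - ω₁ ≤ 4 t^(-2/α)}`; the cone over a cap of height `s` fits in a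
box of volume `O(s^((n-1)/2))`, so `σ {F ≥ t} = O(t^(-β))` with `β = (n-1)/α < 1`, uniformly in
`R`. Moreover `F ≤ T := (1 - R)^(-α)`. The layer-cake formula then gives
`∫ F dσ ≤ σ(S) + C T^(1-β) = σ(S) + C (1 - R)^(n-1-α)`.
-/

theorem lintegral_Ioc_one_rpow_le {c β T : ℝ} (hc : 0 ≤ c) (hβ : β < 1) (hT : 1 ≤ T) :
    ∫⁻ t in Ioc 1 T, ENNReal.ofReal (c * t ^ (-β)) ≤
      ENNReal.ofReal (c / (1 - β) * T ^ (1 - β)) := by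
  have hint : IntervalIntegrable (fun t : ℝ => c * t ^ (-β)) volume 1 T :=
    (intervalIntegral.intervalIntegrable_rpow' (by linarith)).const_mul c
  rw [← ofReal_integral_eq_lintegral_ofReal
    ((intervalIntegrable_iff_integrableOn_Ioc_of_le hT).mp hint)
    (ae_restrict_of_forall_mem measurableSet_Ioc fun t ht => by
      have : 0 < t := zero_lt_one.trans ht.1
      positivity),
    ← intervalIntegral.integral_of_le hT, intervalIntegral.integral_const_mul,
    integral_rpow (.inl (by linarith)), one_rpow, neg_add_eq_sub]
  have : 0 < 1 - β := by linarith
  rw [div_mul_eq_mul_div, mul_div_assoc]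
  gcongr
  linarith

theorem integral_le_of_meas_superlevel_le_rpow {X : Type*} [MeasurableSpace X] (μ : Measure X)
    [IsFiniteMeasure μ] {f : X → ℝ} (hf0 : 0 ≤ f) (hfm : Measurable f) {T c β : ℝ}
    (hT : 1 ≤ T) (hfT : ∀ x, f x ≤ T) (hc : 0 ≤ c) (hβ : β < 1)
    (hlevel : ∀ t, 0 < t → μ {x | t ≤ f x} ≤ ENNReal.ofReal (c * t ^ (-β))) :
    ∫ x, f x ∂μ ≤ μ.real univ + c / (1 - β) * T ^ (1 - β) := by
  have hsplit : ∀ t ∈ Ioi (0 : ℝ), μ {x | t ≤ f x} ≤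
      (Ioc 0 1).indicator (fun _ => μ univ) t +
        (Ioc 1 T).indicator (fun t => ENNReal.ofReal (c * t ^ (-β))) t := by
    intro t (ht : 0 < t)
    rcases le_or_gt t 1 with ht1 | ht1
    · rw [indicator_of_mem (show t ∈ Ioc 0 1 from ⟨ht, ht1⟩)]
      exact le_add_right (measure_mono (subset_univ _))
    rcases le_or_gt t T with htT | htT
    · rw [indicator_of_mem (show t ∈ Ioc 1 T from ⟨ht1, htT⟩)]
      exact le_add_left (hlevel t ht)
    · have hempty : {x | t ≤ f x} = ∅ :=
        eq_empty_of_forall_notMem fun x hx => (hfT x).not_gt (htT.trans_le hx)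
      simp [hempty]
  have hlintegral : ∫⁻ x, ENNReal.ofReal (f x) ∂μ ≤
      ENNReal.ofReal (μ.real univ + c / (1 - β) * T ^ (1 - β)) := calc
    ∫⁻ x, ENNReal.ofReal (f x) ∂μ = ∫⁻ t in Ioi 0, μ {x | t ≤ f x} :=
      lintegral_eq_lintegral_meas_le μ (.of_forall hf0) hfm.aemeasurable
    _ ≤ ∫⁻ t in Ioi 0, ((Ioc 0 1).indicator (fun _ => μ univ) t +
        (Ioc 1 T).indicator (fun t => ENNReal.ofReal (c * t ^ (-β))) t) :=
      setLIntegral_mono' measurableSet_Ioi hsplit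
    _ ≤ ∫⁻ t, ((Ioc 0 1).indicator (fun _ => μ univ) t +
        (Ioc 1 T).indicator (fun t => ENNReal.ofReal (c * t ^ (-β))) t) :=
      setLIntegral_le_lintegral _ _
    _ = μ univ * volume (Ioc (0 : ℝ) 1) +
        ∫⁻ t in Ioc 1 T, ENNReal.ofReal (c * t ^ (-β)) := by
      rw [lintegral_add_left (measurable_const.indicator measurableSet_Ioc),
        lintegral_indicator_const measurableSet_Ioc, lintegral_indicator measurableSet_Ioc]
    _ ≤ ENNReal.ofReal (μ.real univ) + ENNReal.ofReal (c / (1 - β) * T ^ (1 - β)) := by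
      rw [Real.volume_Ioc, sub_zero, ENNReal.ofReal_one, mul_one, ofReal_measureReal]
      gcongr
      exact lintegral_Ioc_one_rpow_le hc hβ hT
    _ = _ := (ENNReal.ofReal_add measureReal_nonneg (by
      have : 0 < 1 - β := by linarith
      positivity)).symm
  rw [integral_eq_lintegral_of_nonneg_ae (.of_forall hf0) hfm.aestronglyMeasurable]
  exact ENNReal.toReal_le_of_le_ofReal (by positivity) hlintegral

section UnitVectors

variable {E : Type*} [NormedAddCommGroup E] [InnerProductSpace ℝ E] {e ω : E}

theorem norm_sub_smul_sq_of_norm_eq_one (he : ‖e‖ = 1) (hω : ‖ω‖ = 1) (R : ℝ) :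
    ‖e - R • ω‖ ^ 2 = (1 - R) ^ 2 + 2 * R * (1 - ⟪e, ω⟫) := by
  rw [norm_sub_sq_real, real_inner_smul_right, norm_smul, he, hω, Real.norm_eq_abs, mul_one,
    sq_abs]
  ring

theorem one_sub_inner_le_four_mul_norm_sub_smul_sq (he : ‖e‖ = 1) (hω : ‖ω‖ = 1) {R : ℝ}
    (hR : 0 ≤ R) : 1 - ⟪e, ω⟫ ≤ 4 * ‖e - R • ω‖ ^ 2 := by
  have hinner : -1 ≤ ⟪e, ω⟫ := by
    have := neg_abs_le ⟪e, ω⟫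
    have := abs_real_inner_le_norm e ω
    rw [he, hω, one_mul] at this
    linarith
  have hinner' : ⟪e, ω⟫ ≤ 1 := (real_inner_le_norm e ω).trans (by rw [he, hω, one_mul])
  rw [norm_sub_smul_sq_of_norm_eq_one he hω]
  -- for `R ≥ 1/8` the term `8 R (1 - ⟪e, ω⟫)` suffices, otherwise `(1 - R)^2 > 1/2`
  rcases le_or_gt (1 / 8) R with hR8 | hR8
  · nlinarith
  · nlinarith

theorem one_sub_le_norm_sub_smul (he : ‖e‖ = 1) (hω : ‖ω‖ = 1) {R : ℝ} (hR : 0 ≤ R) :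
    1 - R ≤ ‖e - R • ω‖ := by
  simpa [he, norm_smul, hω, abs_of_nonneg hR] using norm_sub_norm_le e (R • ω)

end UnitVectors

namespace EuclideanSpace

variable {ι : Type*} [Fintype ι]

theorem sq_apply_le_two_mul_one_sub_apply {x : EuclideanSpace ℝ ι} (hx : ‖x‖ = 1) {i j : ι}
    (hji : j ≠ i) : x j ^ 2 ≤ 2 * (1 - x i) := by
  classical
  have hpair : x j ^ 2 + x i ^ 2 ≤ 1 := by
    have hsum : ∑ k, x k ^ 2 = 1 := by simpa [hx] using (EuclideanSpace.norm_sq_eq x).symm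
    rw [← hsum, ← Finset.sum_pair hji (f := fun k => x k ^ 2)]
    exact Finset.sum_le_univ_sum_of_nonneg fun k => sq_nonneg _
  nlinarith [sq_nonneg (x j)]

theorem volume_preimage_ofLp_pi_Icc_neg (b : ι → ℝ) :
    volume (WithLp.ofLp ⁻¹' univ.pi fun j => Icc (-b j) (b j) : Set (EuclideanSpace ℝ ι)) =
      ∏ j, ENNReal.ofReal (2 * b j) := by
  rw [(PiLp.volume_preserving_ofLp ι).measure_preimage
    (MeasurableSet.univ_pi fun _ => measurableSet_Icc).nullMeasurableSet, volume_pi_pi]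
  simp_rw [Real.volume_Icc, sub_neg_eq_add, two_mul]

theorem toSphere_cap_le (i : ι) : ∃ c : ℝ, 0 ≤ c ∧ ∀ s : ℝ, 0 ≤ s →
    (volume : Measure (EuclideanSpace ℝ ι)).toSphere
        {ω : sphere (0 : EuclideanSpace ℝ ι) 1 | 1 - (ω : EuclideanSpace ℝ ι) i ≤ s}
      ≤ ENNReal.ofReal (c * s ^ (((Fintype.card ι : ℝ) - 1) / 2)) := by
  classical
  set d := Fintype.card ι
  refine ⟨d * 2 * 8 ^ (((d : ℝ) - 1) / 2), by positivity, fun s hs => ?_⟩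
  set cap := {ω : sphere (0 : EuclideanSpace ℝ ι) 1 | 1 - (ω : EuclideanSpace ℝ ι) i ≤ s}
  have hcap : MeasurableSet cap :=
    measurableSet_le ((measurable_pi_apply i).comp (PiLp.volume_preserving_ofLp ι).measurable
      |>.comp measurable_subtype_coe |>.const_sub 1) measurable_const
  set b : ι → ℝ := fun j => if j = i then 1 else √(2 * s)
  have hcone : Ioo (0 : ℝ) 1 • (Subtype.val '' cap) ⊆
      WithLp.ofLp ⁻¹' univ.pi fun j => Icc (-b j) (b j) := by
    rintro _ ⟨r, ⟨hr0, hr1⟩, _, ⟨ω, hω, rfl⟩, rfl⟩ j -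
    have hω1 : ‖(ω : EuclideanSpace ℝ ι)‖ = 1 := mem_sphere_zero_iff_norm.mp ω.2
    have hωj : |(ω : EuclideanSpace ℝ ι) j| ≤ b j := by
      by_cases hji : j = i
      · simpa [b, hji, hω1] using PiLp.norm_apply_le (ω : EuclideanSpace ℝ ι) i
      · simp only [b, hji, if_false]
        exact abs_le_sqrt ((sq_apply_le_two_mul_one_sub_apply hω1 hji).trans (by
          have : 1 - (ω : EuclideanSpace ℝ ι) i ≤ s := hω
          linarith))
    rw [mem_Icc, ← abs_le]
    calc |r * (ω : EuclideanSpace ℝ ι) j| = r * |(ω : EuclideanSpace ℝ ι) j| := by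
          rw [abs_mul, abs_of_pos hr0]
      _ ≤ b j := by nlinarith [abs_nonneg ((ω : EuclideanSpace ℝ ι) j)]
  have hbox : ∏ j, ENNReal.ofReal (2 * b j) =
      ENNReal.ofReal (2 * (2 * √(2 * s)) ^ (d - 1)) := by
    have hside : ∀ j ∈ ({i}ᶜ : Finset ι),
        ENNReal.ofReal (2 * b j) = .ofReal (2 * √(2 * s)) :=
      fun j hj => by simp only [b, if_neg (Finset.mem_compl.mp hj ∘ Finset.mem_singleton.mpr)]
    rw [Fintype.prod_eq_mul_prod_compl i, Finset.prod_congr rfl hside, Finset.prod_const,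
      Finset.card_compl, Finset.card_singleton, ← ENNReal.ofReal_pow (by positivity),
      ← ENNReal.ofReal_mul (by simp [b])]
    simp [b, d]
  have hd : ((d - 1 : ℕ) : ℝ) = d - 1 := by
    rw [Nat.cast_sub (Fintype.card_pos_iff.mpr ⟨i⟩), Nat.cast_one]
  have hpow :
      (2 * √(2 * s)) ^ (d - 1) = 8 ^ (((d : ℝ) - 1) / 2) * s ^ (((d : ℝ) - 1) / 2) := by
    have : 2 * √(2 * s) = √(8 * s) := by
      rw [show 8 * s = 2 ^ 2 * (2 * s) by ring, sqrt_mul (sq_nonneg 2) (2 * s),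
        sqrt_sq zero_le_two]
    rw [this, sqrt_eq_rpow, ← rpow_natCast, ← rpow_mul (by positivity), hd,
      ← mul_rpow (by norm_num) hs]
    ring_nf
  calc (volume : Measure (EuclideanSpace ℝ ι)).toSphere cap
      = d * volume (Ioo (0 : ℝ) 1 • (Subtype.val '' cap)) := by
        rw [Measure.toSphere_apply' _ hcap, finrank_euclideanSpace]
    _ ≤ d * ∏ j, ENNReal.ofReal (2 * b j) := by
        rw [← volume_preimage_ofLp_pi_Icc_neg]
        gcongr
    _ = _ := by
      rw [hbox, ← ENNReal.ofReal_natCast, ← ENNReal.ofReal_mul (by positivity), hpow]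
      ring_nf

variable [DecidableEq ι]

theorem toSphere_superlevel_norm_single_sub_smul_rpow_le (i : ι) {α : ℝ} (hα : 0 < α) :
    ∃ c : ℝ, 0 ≤ c ∧ ∀ R : ℝ, 0 ≤ R → ∀ t : ℝ, 0 < t →
      (volume : Measure (EuclideanSpace ℝ ι)).toSphere
          {ω : sphere (0 : EuclideanSpace ℝ ι) 1 |
            t ≤ ‖single i 1 - R • (ω : EuclideanSpace ℝ ι)‖ ^ (-α)}
        ≤ ENNReal.ofReal (c * t ^ (-(((Fintype.card ι : ℝ) - 1) / α))) := by
  obtain ⟨c, hc0, hcap⟩ := toSphere_cap_le i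
  refine ⟨c * 4 ^ (((Fintype.card ι : ℝ) - 1) / 2), by positivity, fun R hR t ht => ?_⟩
  calc _ ≤ (volume : Measure (EuclideanSpace ℝ ι)).toSphere
        {ω : sphere (0 : EuclideanSpace ℝ ι) 1 |
          1 - (ω : EuclideanSpace ℝ ι) i ≤ 4 * t ^ (-(2 / α))} := by
        refine measure_mono fun ω (hω : t ≤ _) => ?_
        set x := single i 1 - R • (ω : EuclideanSpace ℝ ι)
        have hx : ‖x‖ ^ 2 ≤ t ^ (-(2 / α)) := calc
          ‖x‖ ^ 2 = (‖x‖ ^ (-α)) ^ (-(2 / α)) := by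
            rw [← rpow_mul (norm_nonneg x), ← rpow_natCast]
            congr 1
            field_simp
            norm_num
          _ ≤ t ^ (-(2 / α)) :=
            rpow_le_rpow_of_nonpos ht hω (neg_nonpos.mpr (div_nonneg zero_le_two hα.le))
        have he : ‖(single i 1 : EuclideanSpace ℝ ι)‖ = 1 := by simp
        have := one_sub_inner_le_four_mul_norm_sub_smul_sq he
          (mem_sphere_zero_iff_norm.mp ω.2) hR
        rw [inner_single_left, map_one, one_mul] at this
        show 1 - (ω : EuclideanSpace ℝ ι) i ≤ _
        linarith
    _ ≤ ENNReal.ofReal (c * (4 * t ^ (-(2 / α))) ^ (((Fintype.card ι : ℝ) - 1) / 2)) :=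
        hcap _ (by positivity)
    _ = _ := by
        rw [mul_rpow zero_le_four (by positivity), ← rpow_mul ht.le]
        ring_nf

theorem integral_norm_single_sub_smul_rpow_le (i : ι) {α : ℝ}
    (hα : (Fintype.card ι : ℝ) - 1 < α) :
    ∃ C : ℝ, ∀ R ∈ Ico (0 : ℝ) 1,
      ∫ ω : sphere (0 : EuclideanSpace ℝ ι) 1,
          ‖single i 1 - R • (ω : EuclideanSpace ℝ ι)‖ ^ (-α)
          ∂(volume : Measure (EuclideanSpace ℝ ι)).toSphere
        ≤ C * (1 - R) ^ (-α + Fintype.card ι - 1) := by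
  set d : ℝ := (Fintype.card ι : ℝ)
  set σ := (volume : Measure (EuclideanSpace ℝ ι)).toSphere
  have hd : (1 : ℝ) ≤ d := Nat.one_le_cast.mpr (Fintype.card_pos_iff.mpr ⟨i⟩)
  have hα0 : 0 < α := by linarith
  set β := (d - 1) / α
  have hβ : β < 1 := (div_lt_one hα0).mpr hα
  obtain ⟨c, hc0, hlevel⟩ := toSphere_superlevel_norm_single_sub_smul_rpow_le i hα0
  refine ⟨σ.real univ + c / (1 - β), fun R ⟨hR0, hR1⟩ => ?_⟩
  have hδ : 0 < 1 - R := sub_pos.mpr hR1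
  have he : ‖(single i 1 : EuclideanSpace ℝ ι)‖ = 1 := by simp
  have hnorm : ∀ ω : sphere (0 : EuclideanSpace ℝ ι) 1,
      1 - R ≤ ‖single i 1 - R • (ω : EuclideanSpace ℝ ι)‖ := fun ω =>
    one_sub_le_norm_sub_smul he (mem_sphere_zero_iff_norm.mp ω.2) hR0
  have hT : 1 ≤ (1 - R) ^ (-α) :=
    one_le_rpow_of_pos_of_le_one_of_nonpos hδ (by linarith) (by linarith)
  have hexp : 1 ≤ (1 - R) ^ (-α + d - 1) :=
    one_le_rpow_of_pos_of_le_one_of_nonpos hδ (by linarith) (by linarith)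
  calc _ ≤ σ.real univ + c / (1 - β) * ((1 - R) ^ (-α)) ^ (1 - β) :=
        integral_le_of_meas_superlevel_le_rpow σ (fun ω => by positivity)
          ((continuous_const.sub (continuous_subtype_val.const_smul R)).norm.measurable.pow_const _)
          hT (fun ω => rpow_le_rpow_of_nonpos hδ (hnorm ω) (by linarith)) hc0 hβ (hlevel R hR0)
    _ = σ.real univ + c / (1 - β) * (1 - R) ^ (-α + d - 1) := by
        rw [← rpow_mul hδ.le]
        congr 3
        simp only [β]
        field_simp
        ring
    _ ≤ (σ.real univ + c / (1 - β)) * (1 - R) ^ (-α + d - 1) := by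
        have hβ' : 0 < 1 - β := by linarith
        have hσ : 0 ≤ σ.real univ := measureReal_nonneg
        nlinarith [div_nonneg hc0 hβ'.le]

end EuclideanSpace

theorem stmt_6 {n : ℕ} (hn : 2 ≤ n) (α : ℝ) (hα0 : (n : ℝ) - 1 < α)
    (g : ℝ → ℝ)
    (hg : ∀ R : ℝ, g R =
      (1 / ((volume : Measure (EuclideanSpace ℝ (Fin n))).toSphere Set.univ).toReal) *
        ∫ ω : sphere (0 : EuclideanSpace ℝ (Fin n)) 1,
          ‖(EuclideanSpace.single (⟨0, by omega⟩ : Fin n) (1 : ℝ)) -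
              R • (ω : EuclideanSpace ℝ (Fin n))‖ ^ (-α)
          ∂((volume : Measure (EuclideanSpace ℝ (Fin n))).toSphere)) :
    ∃ C : ℝ, ∀ R ∈ Set.Ico (0 : ℝ) 1, g R ≤ C * (1 - R) ^ (-α + (n : ℝ) - 1) := by
  obtain ⟨C, hC⟩ := EuclideanSpace.integral_norm_single_sub_smul_rpow_le
    (⟨0, by omega⟩ : Fin n) (α := α) (by rwa [Fintype.card_fin])
  refine ⟨1 / ((volume : Measure (EuclideanSpace ℝ (Fin n))).toSphere univ).toReal * C,
    fun R hR => ?_⟩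
  rw [hg, mul_assoc]
  gcongr
  simpa only [Fintype.card_fin] using hC R hR
end

section
/- For s ∈ (0, n) and R > 0, the function u_R := K_{n,s} I_{n-s} * f_R with f_R(y) = (|S^{n-1}| ln R)^{-s/n} 1_{B_R \ B_1}(y) |y|^{-s} satisfies: f_R has L^{n/s}(ℝ^n) norm equal to 1, and there is a constant c > 0 independent of R such that u_R(x) ≥ c (ln R)^{(n-s)/n} for every x ∈ B_1 and R ≥ 2. -/
/-!
In polar coordinates `∫_{1 ≤ |y| < R} |y|^{-n} dy = |S^{n-1}| ln R`, and `|f_R|^{n/s}` is exactly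
`|y|^{-n} 1_{B_R \ B_1}` divided by this number, so `‖f_R‖_{n/s} = 1`.
For `|x| < 1 ≤ |y|` we have `|x - y| ≤ 2|y|`; since the exponent `-n + s` is negative, the kernel
`|x - y|^{-n+s} |y|^{-s}` dominates `2^{-n+s} |y|^{-n}` on the annulus, whence
`u_R(x) ≥ K 2^{-n+s} (|S^{n-1}| ln R)^{1 - s/n}`.
-/

open MeasureTheory Real Set Module Metric

section Annulus

variable {E : Type*} [NormedAddCommGroup E]

def annulus (R : ℝ) : Set E := {z | 1 ≤ ‖z‖ ∧ ‖z‖ < R}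

lemma norm_sub_le_two_mul_norm_of_norm_le {x y : E} (h : ‖x‖ ≤ ‖y‖) : ‖x - y‖ ≤ 2 * ‖y‖ := by
  linarith [norm_sub_le x y]

lemma one_sub_norm_le_norm_sub_of_one_le {x y : E} (hy : 1 ≤ ‖y‖) : 1 - ‖x‖ ≤ ‖x - y‖ := by
  linarith [norm_sub_norm_le y x, norm_sub_rev x y]

variable [MeasurableSpace E] [OpensMeasurableSpace E]

lemma measurableSet_annulus (R : ℝ) : MeasurableSet (annulus R : Set E) :=
  measurable_norm measurableSet_Ico

variable [ProperSpace E] {μ : Measure E} [IsFiniteMeasureOnCompacts μ]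

lemma integrableOn_annulus_of_bounded {F : Type*} [NormedAddCommGroup F] {w : E → F} {R M : ℝ}
    (hw : ContinuousOn w (annulus R)) (hM : ∀ z ∈ annulus R, ‖w z‖ ≤ M) :
    IntegrableOn w (annulus R) μ :=
  ⟨hw.aestronglyMeasurable (measurableSet_annulus R),
    .restrict_of_bounded (C := M)
      (measure_lt_top_of_subset (fun z hz => by simpa using hz.2) (measure_ball_lt_top (x := 0)).ne)
      ((ae_restrict_iff' (measurableSet_annulus R)).2 (.of_forall hM))⟩

lemma integrableOn_annulus_norm_rpow_of_nonpos {a : ℝ} (ha : a ≤ 0) (R : ℝ) :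
    IntegrableOn (fun y : E => ‖y‖ ^ a) (annulus R) μ :=
  integrableOn_annulus_of_bounded (M := 1)
    (continuous_norm.continuousOn.rpow_const fun _ hz => .inl (zero_lt_one.trans_le hz.1).ne')
    fun _ hz => by
      rw [norm_of_nonneg (by positivity)]
      exact rpow_le_one_of_one_le_of_nonpos hz.1 ha

lemma integrableOn_annulus_riesz_kernel {a s : ℝ} (ha : a ≤ 0) (hs : 0 ≤ s) (R : ℝ) {x : E}
    (hx : ‖x‖ < 1) : IntegrableOn (fun y => ‖x - y‖ ^ a * ‖y‖ ^ (-s)) (annulus R) μ := by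
  have hdist : ∀ y ∈ annulus R, 1 - ‖x‖ ≤ ‖x - y‖ := fun y hy =>
    one_sub_norm_le_norm_sub_of_one_le hy.1
  refine integrableOn_annulus_of_bounded (M := (1 - ‖x‖) ^ a) ?_ fun y hy => ?_
  · have hcont : ContinuousOn (fun y => ‖x - y‖) (annulus R) := by fun_prop
    exact (hcont.rpow_const fun y hy => .inl (by linarith [hdist y hy])).mul
      (continuous_norm.continuousOn.rpow_const fun y hy => .inl (zero_lt_one.trans_le hy.1).ne')
  · rw [norm_of_nonneg (by positivity), ← mul_one ((1 - ‖x‖) ^ a)]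
    exact mul_le_mul (rpow_le_rpow_of_nonpos (by linarith) (hdist y hy) ha)
      (rpow_le_one_of_one_le_of_nonpos hy.1 (by linarith)) (by positivity) (by positivity)

end Annulus

lemma eLpNorm_ofReal_eq_one {α F : Type*} [MeasurableSpace α] {μ : Measure α} [NormedAddCommGroup F]
    {f : α → F} {p : ℝ} (hp : 0 < p) (hf : AEStronglyMeasurable f μ)
    (hint : Integrable (fun x => ‖f x‖ ^ p) μ) (h : ∫ x, ‖f x‖ ^ p ∂μ = 1) :
    eLpNorm f (ENNReal.ofReal p) μ = 1 := by
  have hp0 : ENNReal.ofReal p ≠ 0 := by simpa using hp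
  have hmem : MemLp f (ENNReal.ofReal p) μ := by
    rw [← integrable_norm_rpow_iff hf hp0 ENNReal.ofReal_ne_top, ENNReal.toReal_ofReal hp.le]
    exact hint
  rw [hmem.eLpNorm_eq_integral_rpow_norm hp0 ENNReal.ofReal_ne_top, ENNReal.toReal_ofReal hp.le, h,
    one_rpow, ENNReal.ofReal_one]

section Haar

variable {E : Type*} [NormedAddCommGroup E] [NormedSpace ℝ E] [FiniteDimensional ℝ E]
  [MeasurableSpace E] [BorelSpace E] [Nontrivial E] (μ : Measure E) [μ.IsAddHaarMeasure]

lemma toSphere_real_univ_pos : 0 < μ.toSphere.real univ :=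
  have : NeZero μ.toSphere := ⟨μ.toSphere_ne_zero⟩
  measureReal_univ_pos

lemma setIntegral_annulus_norm_rpow_neg_finrank {n : ℕ} (hE : finrank ℝ E = n) {R : ℝ}
    (hR : 1 ≤ R) : ∫ y in annulus R, ‖y‖ ^ (-(n : ℝ)) ∂μ = μ.toSphere.real univ * log R := by
  have hn : 1 ≤ n := hE ▸ finrank_pos
  have hradial : ∀ r ∈ Ioi (0 : ℝ),
      r ^ (n - 1) • (Ico 1 R).indicator (fun r : ℝ => r ^ (-(n : ℝ))) r
        = (Ico 1 R).indicator (fun r : ℝ => r⁻¹) r := by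
    intro r (hr : 0 < r)
    by_cases h : r ∈ Ico 1 R
    · rw [indicator_of_mem h, indicator_of_mem h, smul_eq_mul, ← rpow_natCast,
        ← rpow_add hr, Nat.cast_sub hn, Nat.cast_one, show (n : ℝ) - 1 + -n = -1 by ring,
        rpow_neg_one]
    · rw [indicator_of_notMem h, indicator_of_notMem h, smul_zero]
  rw [← integral_indicator (measurableSet_annulus R)]
  change ∫ y, (Ico 1 R).indicator (fun r : ℝ => r ^ (-(n : ℝ))) ‖y‖ ∂μ = _
  rw [integral_fun_norm_addHaar, hE, setIntegral_congr_fun measurableSet_Ioi hradial,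
    integral_indicator measurableSet_Ico, Measure.restrict_restrict measurableSet_Ico,
    (inter_eq_left (s := Ico 1 R) (t := Ioi 0)).2 fun r hr => zero_lt_one.trans_le hr.1,
    integral_Ico_eq_integral_Ioc, ← intervalIntegral.integral_of_le hR,
    integral_inv_of_pos one_pos (by linarith), div_one, Measure.toSphere_real_apply_univ, hE]
  simp only [nsmul_eq_mul, smul_eq_mul]
  ring

lemma eLpNorm_normalized_annulus_profile {n : ℕ} (hE : finrank ℝ E = n) {s R : ℝ} (hs : 0 < s)
    (hR : 1 < R) :
    eLpNorm (fun y => (μ.toSphere.real univ * log R) ^ (-(s / n)) *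
        (annulus R).indicator (fun z => ‖z‖ ^ (-s)) y) (ENNReal.ofReal (n / s)) μ = 1 := by
  set L := μ.toSphere.real univ * log R
  have hL : 0 < L := mul_pos (toSphere_real_univ_pos μ) (log_pos hR)
  have hn : (0 : ℝ) < n := Nat.cast_pos.2 (hE ▸ finrank_pos)
  have hpow : ∀ y, ‖L ^ (-(s / n)) * (annulus R).indicator (fun z : E => ‖z‖ ^ (-s)) y‖ ^ (n / s)
      = L⁻¹ * (annulus R).indicator (fun z => ‖z‖ ^ (-(n : ℝ))) y := by
    intro y
    by_cases hy : y ∈ annulus R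
    · have hy0 : 0 ≤ ‖y‖ := norm_nonneg y
      rw [indicator_of_mem hy, indicator_of_mem hy, norm_of_nonneg (by positivity),
        mul_rpow (by positivity) (by positivity), ← rpow_mul hL.le, ← rpow_mul hy0,
        ← rpow_neg_one]
      congr 2 <;> field_simp
    · rw [indicator_of_notMem hy, indicator_of_notMem hy, mul_zero, mul_zero, norm_zero,
        zero_rpow (by positivity)]
  refine eLpNorm_ofReal_eq_one (by positivity) ?_ ?_ ?_
  · exact ((measurable_norm.pow_const _).indicator (measurableSet_annulus R)).const_mul _
      |>.aestronglyMeasurable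
  · simp_rw [hpow]
    exact ((integrableOn_annulus_norm_rpow_of_nonpos (by linarith) R).integrable_indicator
      (measurableSet_annulus R)).const_mul _
  · simp_rw [hpow]
    rw [integral_const_mul, integral_indicator (measurableSet_annulus R),
      setIntegral_annulus_norm_rpow_neg_finrank μ hE hR.le, inv_mul_cancel₀ hL.ne']

lemma two_rpow_mul_le_setIntegral_annulus_riesz_kernel {n : ℕ} (hE : finrank ℝ E = n) {s R : ℝ}
    (hs : 0 ≤ s) (hsn : s ≤ n) (hR : 1 ≤ R) {x : E} (hx : ‖x‖ < 1) :
    2 ^ (-(n : ℝ) + s) * (μ.toSphere.real univ * log R)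
      ≤ ∫ y in annulus R, ‖x - y‖ ^ (-(n : ℝ) + s) * ‖y‖ ^ (-s) ∂μ := by
  have ha : -(n : ℝ) + s ≤ 0 := by linarith
  rw [← setIntegral_annulus_norm_rpow_neg_finrank μ hE hR, ← integral_const_mul]
  refine setIntegral_mono_on ((integrableOn_annulus_norm_rpow_of_nonpos (by linarith) R).const_mul _)
    (integrableOn_annulus_riesz_kernel ha hs R hx) (measurableSet_annulus R) fun y hy => ?_
  have hy0 : 0 < ‖y‖ := zero_lt_one.trans_le hy.1
  have hxy : 0 < ‖x - y‖ := by linarith [one_sub_norm_le_norm_sub_of_one_le (x := x) hy.1]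
  calc 2 ^ (-(n : ℝ) + s) * ‖y‖ ^ (-(n : ℝ)) = (2 * ‖y‖) ^ (-(n : ℝ) + s) * ‖y‖ ^ (-s) := by
        rw [mul_rpow zero_le_two hy0.le, mul_assoc, ← rpow_add hy0,
          show -(n : ℝ) + s + -s = -n by ring]
    _ ≤ ‖x - y‖ ^ (-(n : ℝ) + s) * ‖y‖ ^ (-s) := mul_le_mul_of_nonneg_right
        (rpow_le_rpow_of_nonpos hxy (norm_sub_le_two_mul_norm_of_norm_le (by linarith [hy.1])) ha)
        (by positivity)

end Haar

theorem stmt_9 {n : ℕ} (hn : 1 ≤ n) (s : ℝ) (hs0 : 0 < s) (hsn : s < n)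
    (K : ℝ) (hK : 0 < K)
    (Sn1 : ℝ)
    (hSn1 : Sn1 = ((volume : Measure (EuclideanSpace ℝ (Fin n))).toSphere Set.univ).toReal)
    (f : ℝ → EuclideanSpace ℝ (Fin n) → ℝ)
    (hf : ∀ R y, f R y =
      (Sn1 * Real.log R) ^ (-(s / n)) *
        Set.indicator {z : EuclideanSpace ℝ (Fin n) | 1 ≤ ‖z‖ ∧ ‖z‖ < R}
          (fun z => ‖z‖ ^ (-s)) y)
    (u : ℝ → EuclideanSpace ℝ (Fin n) → ℝ)
    (hu : ∀ R x, u R x = K * ∫ y, ‖x - y‖ ^ (-(n : ℝ) + s) * f R y) :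
    (∀ R : ℝ, 2 ≤ R →
      eLpNorm (f R) (ENNReal.ofReal ((n : ℝ) / s)) volume = 1) ∧
    (∃ c > 0, ∀ R : ℝ, 2 ≤ R → ∀ x : EuclideanSpace ℝ (Fin n), ‖x‖ < 1 →
      c * Real.log R ^ (((n : ℝ) - s) / n) ≤ u R x) := by
  have hE : finrank ℝ (EuclideanSpace ℝ (Fin n)) = n := finrank_euclideanSpace_fin
  have : Nontrivial (EuclideanSpace ℝ (Fin n)) := nontrivial_of_finrank_pos (hE ▸ hn)
  have hfR : ∀ R, f R = fun y =>
      (Sn1 * log R) ^ (-(s / n)) * (annulus R).indicator (fun z => ‖z‖ ^ (-s)) y :=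
    fun R => funext (hf R)
  have hS : 0 < Sn1 := hSn1 ▸ toSphere_real_univ_pos volume
  refine ⟨fun R hR => ?_, K * 2 ^ (-(n : ℝ) + s) * Sn1 ^ ((n - s) / n), by positivity,
    fun R hR x hx => ?_⟩
  · rw [hfR, hSn1]
    exact eLpNorm_normalized_annulus_profile volume hE hs0 (by linarith)
  have hlog : 0 < log R := log_pos (by linarith)
  have hpow : (Sn1 * log R) ^ (-(s / n)) * (Sn1 * log R)
      = Sn1 ^ ((n - s) / n) * log R ^ ((n - s) / n) := by
    rw [← mul_rpow hS.le hlog.le, ← rpow_add_one (by positivity)]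
    congr 1
    field_simp
    ring
  have hux : u R x = K * ((Sn1 * log R) ^ (-(s / n)) *
      ∫ y in annulus R, ‖x - y‖ ^ (-(n : ℝ) + s) * ‖y‖ ^ (-s)) := by
    rw [hu, ← integral_indicator (measurableSet_annulus R),
      ← integral_const_mul ((Sn1 * log R) ^ (-(s / n)))]
    congr 2 with y
    rw [hf, indicator_mul_right]
    exact mul_left_comm _ _ _
  calc K * 2 ^ (-(n : ℝ) + s) * Sn1 ^ ((n - s) / n) * log R ^ ((n - s) / n)
      = K * ((Sn1 * log R) ^ (-(s / n)) * (2 ^ (-(n : ℝ) + s) * (Sn1 * log R))) := by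
        rw [mul_left_comm _ (2 ^ _), mul_assoc, hpow]
        ring
    _ ≤ u R x := by
        rw [hux, hSn1]
        gcongr
        exact two_rpow_mul_le_setIntegral_annulus_riesz_kernel volume hE hs0.le hsn.le (by linarith) hx
end

section
/- Let n ≥ 2 and s ∈ (0,1). Then for r ≥ 1, ∫_0^r (1 - ρ/r)^{(s-1)n/(n-s)} ρ^{n-1}/(1+ρ²)^{n/2} dρ ≤ C(1 + ln r), and ∫_r^∞ (1 - r/ρ)^{(s-1)n/(n-s)} ρ^{-1}/(1+ρ²)^{n/2} dρ ≤ C r^{-n}, with C depending only on n and s. Here the exponent satisfies (s-1)n/(n-s) > -1. -/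
open MeasureTheory Real Set

/-!
Write `α = (s - 1) n / (n - s) ∈ (-1, 0)`. Both integrals are bounded by integrating
explicit majorants. On `(0, r]` the factor `(1 - ρ / r) ^ α` is at most `2 ^ (-α)` for
`ρ ≤ r / 2`, where the kernel is at most `ρ / (1 + ρ ^ 2)`, whose integral
`log (1 + r ^ 2) / 2` gives the logarithm; for `ρ > r / 2` the kernel is at most `2 / r`,
and `(r - ρ) ^ α` is integrable because `α > -1`. On `(r, ∞)` the kernel is at most
`ρ ^ (-n - 1)`; near `r` the singular factor is integrable again, and for `ρ > 2 r` it is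
at most `2 ^ (-α)`, leaving `∫_r^∞ ρ ^ (-n - 1) = r ^ (-n) / n`.
-/

lemma rpow_le_two_rpow_neg {α x : ℝ} (hα : α ≤ 0) (hx : 1 / 2 ≤ x) :
    x ^ α ≤ 2 ^ (-α) := by
  calc x ^ α ≤ (1 / 2 : ℝ) ^ α := rpow_le_rpow_of_nonpos (by norm_num) hx hα
    _ = 2 ^ (-α) := by rw [one_div, inv_rpow zero_le_two, ← rpow_neg zero_le_two]

lemma pow_le_one_add_sq_rpow (n : ℕ) {ρ : ℝ} (hρ : 0 ≤ ρ) :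
    ρ ^ n ≤ (1 + ρ ^ 2) ^ ((n : ℝ) / 2) := by
  calc ρ ^ n = (ρ ^ 2) ^ ((n : ℝ) / 2) := by
        rw [← rpow_natCast ρ 2, ← rpow_mul hρ, ← rpow_natCast]; ring_nf
    _ ≤ (1 + ρ ^ 2) ^ ((n : ℝ) / 2) := by gcongr; linarith

lemma pow_pred_div_one_add_sq_rpow_le_inv {n : ℕ} (hn : 0 < n) {ρ : ℝ} (hρ : 0 < ρ) :
    ρ ^ (n - 1) / (1 + ρ ^ 2) ^ ((n : ℝ) / 2) ≤ ρ⁻¹ := by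
  rw [div_le_iff₀ (by positivity), inv_mul_eq_div, le_div_iff₀ hρ, ← pow_succ,
    Nat.sub_add_cancel hn]
  exact pow_le_one_add_sq_rpow n hρ.le

lemma pow_pred_div_one_add_sq_rpow_le {n : ℕ} (hn : 2 ≤ n) {ρ : ℝ} (hρ : 0 ≤ ρ) :
    ρ ^ (n - 1) / (1 + ρ ^ 2) ^ ((n : ℝ) / 2) ≤ ρ / (1 + ρ ^ 2) := by
  obtain ⟨m, rfl⟩ := Nat.exists_eq_add_of_le' hn
  have hsplit : (1 + ρ ^ 2) ^ (((m + 2 : ℕ) : ℝ) / 2)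
      = (1 + ρ ^ 2) ^ ((m : ℝ) / 2) * (1 + ρ ^ 2) := by
    rw [← rpow_add_one (by positivity)]; push_cast; ring_nf
  rw [hsplit, show m + 2 - 1 = m + 1 by omega, pow_succ,
    div_le_div_iff₀ (by positivity) (by positivity)]
  have := pow_le_one_add_sq_rpow m hρ
  calc ρ ^ m * ρ * (1 + ρ ^ 2) ≤ (1 + ρ ^ 2) ^ ((m : ℝ) / 2) * ρ * (1 + ρ ^ 2) := by
        gcongr
    _ = ρ * ((1 + ρ ^ 2) ^ ((m : ℝ) / 2) * (1 + ρ ^ 2)) := by ring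

lemma inv_div_one_add_sq_rpow_le (n : ℕ) {ρ : ℝ} (hρ : 0 < ρ) :
    ρ⁻¹ / (1 + ρ ^ 2) ^ ((n : ℝ) / 2) ≤ ρ ^ (-(n : ℝ) - 1) := by
  calc ρ⁻¹ / (1 + ρ ^ 2) ^ ((n : ℝ) / 2) ≤ ρ⁻¹ / ρ ^ n := by
        gcongr; exact pow_le_one_add_sq_rpow n hρ.le
    _ = ρ ^ (-(n : ℝ) - 1) := by
        rw [sub_eq_add_neg, rpow_add hρ, rpow_neg hρ.le, rpow_neg hρ.le, rpow_one,
          rpow_natCast]; ring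

lemma integrableOn_Ioc_sub_rpow {α a b : ℝ} (hα : -1 < α) :
    IntegrableOn (fun x => (b - x) ^ α) (Ioc a b) := by
  simpa using
    ((intervalIntegral.intervalIntegrable_rpow' hα (a := 0) (b := b - a)).comp_sub_left b).symm.1

lemma integral_Ioc_sub_rpow {α a b : ℝ} (hα : -1 < α) (hab : a ≤ b) :
    ∫ x in Ioc a b, (b - x) ^ α = (b - a) ^ (α + 1) / (α + 1) := by
  rw [← intervalIntegral.integral_of_le hab,
    intervalIntegral.integral_comp_sub_left (fun x => x ^ α) b, sub_self,
    integral_rpow (Or.inl hα), zero_rpow (by linarith), sub_zero]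

lemma integrableOn_Ioc_rpow_sub {α a b : ℝ} (hα : -1 < α) :
    IntegrableOn (fun x => (x - a) ^ α) (Ioc a b) := by
  simpa using
    ((intervalIntegral.intervalIntegrable_rpow' hα (a := 0) (b := b - a)).comp_sub_right a).1

lemma integral_Ioc_rpow_sub {α a b : ℝ} (hα : -1 < α) (hab : a ≤ b) :
    ∫ x in Ioc a b, (x - a) ^ α = (b - a) ^ (α + 1) / (α + 1) := by
  rw [← intervalIntegral.integral_of_le hab,
    intervalIntegral.integral_comp_sub_right (fun x => x ^ α) a, sub_self,
    integral_rpow (Or.inl hα), zero_rpow (by linarith), sub_zero]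

lemma integral_Ioc_div_one_add_sq {r : ℝ} (hr : 0 ≤ r) :
    ∫ x in Ioc 0 r, x / (1 + x ^ 2) = log (1 + r ^ 2) / 2 := by
  rw [← intervalIntegral.integral_of_le hr, intervalIntegral.integral_eq_sub_of_hasDerivAt
    (f := fun x => log (1 + x ^ 2) / 2)]
  · norm_num
  · intro x _
    exact (((hasDerivAt_pow 2 x).const_add 1).log (by positivity)).div_const 2
      |>.congr_deriv (by field_simp; ring)
  · exact (continuous_id.div (by fun_prop) fun x => by positivity).intervalIntegrable _ _

lemma log_one_add_sq_div_two_le {r : ℝ} (hr : 1 ≤ r) : log (1 + r ^ 2) / 2 ≤ 1 + log r := by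
  have h2r : log (1 + r ^ 2) ≤ log (2 * r ^ 2) :=
    log_le_log (by positivity) (by nlinarith)
  rw [log_mul two_ne_zero (by positivity), log_pow, Nat.cast_ofNat] at h2r
  linarith [log_two_lt_d9, log_nonneg hr]

lemma one_sub_div_rpow_mul_le {n : ℕ} (hn : 2 ≤ n) {α r ρ : ℝ} (hα : α ≤ 0)
    (hρ : 0 < ρ) (hρr : ρ ≤ r) :
    (1 - ρ / r) ^ α * (ρ ^ (n - 1) / (1 + ρ ^ 2) ^ ((n : ℝ) / 2))
      ≤ 2 ^ (-α) * (ρ / (1 + ρ ^ 2)) + 2 / r ^ (α + 1) * (r - ρ) ^ α := by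
  have hr : 0 < r := hρ.trans_le hρr
  have hrρ : 0 ≤ (r - ρ) ^ α := rpow_nonneg (by linarith) α
  rcases le_or_gt ρ (r / 2) with hρ2 | hρ2
  · have hbase : 1 / 2 ≤ 1 - ρ / r := by
      rw [le_sub_comm, div_le_iff₀ hr]; linarith
    have := mul_le_mul (rpow_le_two_rpow_neg hα hbase)
      (pow_pred_div_one_add_sq_rpow_le hn hρ.le) (by positivity) (by positivity)
    have : 0 ≤ 2 / r ^ (α + 1) * (r - ρ) ^ α := by positivity
    linarith
  · have hbase : (1 - ρ / r) ^ α = (r - ρ) ^ α / r ^ α := by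
      rw [one_sub_div hr.ne', div_rpow (by linarith) hr.le]
    have hkernel : ρ ^ (n - 1) / (1 + ρ ^ 2) ^ ((n : ℝ) / 2) ≤ 2 / r :=
      (pow_pred_div_one_add_sq_rpow_le_inv (by omega) hρ).trans <| by
        rw [inv_le_comm₀ hρ (by positivity), inv_div]; linarith
    calc (1 - ρ / r) ^ α * (ρ ^ (n - 1) / (1 + ρ ^ 2) ^ ((n : ℝ) / 2))
        ≤ (r - ρ) ^ α / r ^ α * (2 / r) := by rw [hbase]; gcongr
      _ = 2 / r ^ (α + 1) * (r - ρ) ^ α := by rw [rpow_add_one hr.ne']; field_simp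
      _ ≤ _ := by linarith [show 0 ≤ 2 ^ (-α) * (ρ / (1 + ρ ^ 2)) by positivity]

lemma integral_Ioc_one_sub_div_rpow_mul_le {n : ℕ} (hn : 2 ≤ n) {α : ℝ} (hα : -1 < α)
    (hα0 : α ≤ 0) {r : ℝ} (hr : 1 ≤ r) :
    ∫ ρ in Ioc 0 r, (1 - ρ / r) ^ α * (ρ ^ (n - 1) / (1 + ρ ^ 2) ^ ((n : ℝ) / 2))
      ≤ (2 ^ (-α) + 2 / (α + 1)) * (1 + log r) := by
  have hr0 : 0 < r := by linarith
  have hα1 : 0 < α + 1 := by linarith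
  have hint : IntegrableOn (fun ρ : ℝ => ρ / (1 + ρ ^ 2)) (Ioc 0 r) :=
    (continuous_id.div (by fun_prop) fun x => by positivity).integrableOn_Ioc
  calc _ ≤ ∫ ρ in Ioc 0 r,
          (2 ^ (-α) * (ρ / (1 + ρ ^ 2)) + 2 / r ^ (α + 1) * (r - ρ) ^ α) := by
        refine setIntegral_mono_of_nonneg (fun ρ ⟨hρ0, hρr⟩ => ?_)
          (fun ρ hρ => one_sub_div_rpow_mul_le hn hα0 hρ.1 hρ.2)
          ((hint.const_mul _).add ((integrableOn_Ioc_sub_rpow hα).const_mul _))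
        have : 0 ≤ 1 - ρ / r := by rwa [sub_nonneg, div_le_one hr0]
        exact mul_nonneg (rpow_nonneg this α) (by positivity)
    _ = 2 ^ (-α) * (log (1 + r ^ 2) / 2) + 2 / (α + 1) := by
        rw [integral_add (hint.const_mul _) ((integrableOn_Ioc_sub_rpow hα).const_mul _),
          integral_const_mul, integral_const_mul, integral_Ioc_div_one_add_sq hr0.le,
          integral_Ioc_sub_rpow hα hr0.le, sub_zero]
        field_simp
    _ ≤ _ := by
        have := log_one_add_sq_div_two_le hr
        have := log_nonneg hr
        have : 0 < (2 : ℝ) ^ (-α) := by positivity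
        have : 0 < 2 / (α + 1) := div_pos two_pos hα1
        nlinarith

lemma one_sub_div_rpow_mul_le_of_lt (n : ℕ) {α r ρ : ℝ} (hα : α ≤ 0) (hr : 0 < r)
    (hrρ : r < ρ) :
    (1 - r / ρ) ^ α * (ρ⁻¹ / (1 + ρ ^ 2) ^ ((n : ℝ) / 2))
      ≤ (2 * r) ^ (-α) * r ^ (-(n : ℝ) - 1) *
          (Ioc r (2 * r)).indicator (fun x => (x - r) ^ α) ρ
        + 2 ^ (-α) * ρ ^ (-(n : ℝ) - 1) := by
  have hρ : 0 < ρ := hr.trans hrρ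
  have hkernel := inv_div_one_add_sq_rpow_le n hρ
  rcases le_or_gt ρ (2 * r) with hρ2 | hρ2
  · rw [indicator_of_mem (show ρ ∈ Ioc r (2 * r) from ⟨hrρ, hρ2⟩)]
    have hbase : (1 - r / ρ) ^ α ≤ (2 * r) ^ (-α) * (ρ - r) ^ α :=
      calc (1 - r / ρ) ^ α = ((ρ - r) / ρ) ^ α := by rw [one_sub_div hρ.ne']
        _ ≤ ((ρ - r) / (2 * r)) ^ α :=
          rpow_le_rpow_of_nonpos (by positivity) (by gcongr) hα
        _ = (2 * r) ^ (-α) * (ρ - r) ^ α := by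
          rw [div_rpow (by linarith) (by positivity), rpow_neg (by positivity)]; ring
    have hρr : ρ ^ (-(n : ℝ) - 1) ≤ r ^ (-(n : ℝ) - 1) :=
      rpow_le_rpow_of_nonpos hr hrρ.le (by linarith [n.cast_nonneg (α := ℝ)])
    have := mul_le_mul hbase (hkernel.trans hρr) (by positivity)
      (mul_nonneg (by positivity) (rpow_nonneg (by linarith) α))
    have : 0 ≤ 2 ^ (-α) * ρ ^ (-(n : ℝ) - 1) := by positivity
    linarith
  · rw [indicator_of_notMem fun h => (h.2.trans_lt hρ2).false, mul_zero, zero_add]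
    have hbase : 1 / 2 ≤ 1 - r / ρ := by
      rw [le_sub_comm, div_le_iff₀ hρ]; linarith
    exact mul_le_mul (rpow_le_two_rpow_neg hα hbase) hkernel (by positivity) (by positivity)

lemma integral_Ioi_one_sub_div_rpow_mul_le {n : ℕ} (hn : 0 < n) {α : ℝ} (hα : -1 < α)
    (hα0 : α ≤ 0) {r : ℝ} (hr : 0 < r) :
    ∫ ρ in Ioi r, (1 - r / ρ) ^ α * (ρ⁻¹ / (1 + ρ ^ 2) ^ ((n : ℝ) / 2))
      ≤ 2 ^ (-α) * (1 / (α + 1) + 1 / n) * r ^ (-(n : ℝ)) := by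
  have hn' : (0 : ℝ) < n := by exact_mod_cast hn
  have hexp : -(n : ℝ) - 1 < -1 := by linarith
  have hind : IntegrableOn ((Ioc r (2 * r)).indicator fun x => (x - r) ^ α) (Ioi r) :=
    ((integrableOn_Ioc_rpow_sub hα).integrable_indicator measurableSet_Ioc).integrableOn
  have hpow : IntegrableOn (fun ρ : ℝ => ρ ^ (-(n : ℝ) - 1)) (Ioi r) :=
    integrableOn_Ioi_rpow_of_lt hexp hr
  calc _ ≤ ∫ ρ in Ioi r, ((2 * r) ^ (-α) * r ^ (-(n : ℝ) - 1) *
          (Ioc r (2 * r)).indicator (fun x => (x - r) ^ α) ρ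
          + 2 ^ (-α) * ρ ^ (-(n : ℝ) - 1)) := by
        refine setIntegral_mono_of_nonneg (fun ρ hρ => ?_)
          (fun ρ hρ => one_sub_div_rpow_mul_le_of_lt n hα0 hr hρ)
          ((hind.const_mul _).add (hpow.const_mul _))
        have hρ0 : 0 < ρ := hr.trans hρ
        have : 0 ≤ 1 - r / ρ := by rw [sub_nonneg, div_le_one hρ0]; exact hρ.le
        exact mul_nonneg (rpow_nonneg this α) (by positivity)
    _ = (2 * r) ^ (-α) * r ^ (-(n : ℝ) - 1) * (r ^ (α + 1) / (α + 1))
          + 2 ^ (-α) * (r ^ (-(n : ℝ)) / n) := by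
        rw [integral_add (hind.const_mul _) (hpow.const_mul _), integral_const_mul,
          integral_const_mul, setIntegral_indicator measurableSet_Ioc,
          inter_eq_right.mpr Ioc_subset_Ioi_self, integral_Ioc_rpow_sub hα (by linarith),
          integral_Ioi_rpow_of_lt hexp hr, two_mul, add_sub_cancel_right, sub_add_cancel,
          div_neg, neg_div, neg_neg]
    _ = _ := by
        have : r ^ (-α) * r ^ (-(n : ℝ) - 1) * r ^ (α + 1) = r ^ (-(n : ℝ)) := by
          rw [← rpow_add hr, ← rpow_add hr]; ring_nf
        rw [mul_rpow zero_le_two hr.le, ← this]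
        field_simp

lemma neg_one_lt_sub_one_mul_div {n s : ℝ} (hn : 1 < n) (hs0 : 0 < s) (hs1 : s < 1) :
    -1 < (s - 1) * n / (n - s) := by
  rw [lt_div_iff₀ (by linarith)]
  nlinarith [mul_pos hs0 (sub_pos.mpr hn)]

lemma sub_one_mul_div_neg {n s : ℝ} (hn : 1 < n) (hs1 : s < 1) :
    (s - 1) * n / (n - s) < 0 :=
  div_neg_of_neg_of_pos (mul_neg_of_neg_of_pos (by linarith) (by linarith)) (by linarith)

theorem stmt_12 {n : ℕ} (hn : 2 ≤ n) (s : ℝ) (hs0 : 0 < s) (hs1 : s < 1) :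
    ((s - 1) * n / ((n : ℝ) - s) > -1) ∧
    ∃ C > 0, ∀ r : ℝ, 1 ≤ r →
      (∫ ρ in Set.Ioc (0 : ℝ) r,
          (1 - ρ / r) ^ ((s - 1) * n / ((n : ℝ) - s)) *
            (ρ ^ (n - 1) / (1 + ρ ^ 2) ^ ((n : ℝ) / 2)))
        ≤ C * (1 + Real.log r) ∧
      (∫ ρ in Set.Ioi r,
          (1 - r / ρ) ^ ((s - 1) * n / ((n : ℝ) - s)) *
            (ρ⁻¹ / (1 + ρ ^ 2) ^ ((n : ℝ) / 2)))
        ≤ C * r ^ (-(n : ℝ)) := by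
  have hn1 : (1 : ℝ) < n := by exact_mod_cast hn
  set α := (s - 1) * n / ((n : ℝ) - s)
  have hα : -1 < α := neg_one_lt_sub_one_mul_div hn1 hs0 hs1
  have hα0 : α ≤ 0 := (sub_one_mul_div_neg hn1 hs1).le
  have hα1 : 0 < α + 1 := by linarith
  set C₀ := 2 ^ (-α) + 2 / (α + 1)
  set C₁ := 2 ^ (-α) * (1 / (α + 1) + 1 / n)
  refine ⟨hα, max C₀ C₁, lt_max_of_lt_left (by positivity), fun r hr => ⟨?_, ?_⟩⟩
  · calc _ ≤ C₀ * (1 + log r) := integral_Ioc_one_sub_div_rpow_mul_le hn hα hα0 hr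
      _ ≤ max C₀ C₁ * (1 + log r) :=
          mul_le_mul_of_nonneg_right (le_max_left _ _) (by linarith [log_nonneg hr])
  · calc _ ≤ C₁ * r ^ (-(n : ℝ)) :=
          integral_Ioi_one_sub_div_rpow_mul_le (by omega) hα hα0 (by linarith)
      _ ≤ max C₀ C₁ * r ^ (-(n : ℝ)) :=
          mul_le_mul_of_nonneg_right (le_max_right _ _) (by positivity)
end

section
/- Let u : ℝ^n \ {0} → ℝ be measurable with f := e^{nu} ∈ L¹(ℝ^n), let v_u(x) = (1/γ) ∫ ln((1+|y|)/|x-y|) f(y) dy with γ > 0 and Λ = ∫ f. Let ū(x) = u(x/|x|²) - 2 ln|x|. Then v_{ū}(x) = v_u(x/|x|²) - (Λ/γ) ln|x| for all x ≠ 0. -/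
/-!
The inversion `y ↦ y / ‖y‖²` is an involution of `ℝⁿ \ {0}` with Jacobian `‖y‖^(-2n)`, and it
scales distances by `‖x* - y*‖ = ‖x - y‖ / (‖x‖ ‖y‖)`. Substituting `y ↦ y*` in the integral
defining `v_ū(x)`, the factor `e^{-2n log ‖y‖}` in `e^{n ū}` is exactly that Jacobian, while the
kernel becomes `log ((1 + ‖y‖) / ‖x* - y‖) - log ‖x‖`; the last term integrates to `Λ log ‖x‖`.
-/

open MeasureTheory Real EuclideanGeometry Module

section InnerProductSpace

variable {E : Type*} [NormedAddCommGroup E] [InnerProductSpace ℝ E]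

lemma inversion_zero_one (y : E) : inversion (0 : E) 1 y = (‖y‖ ^ 2)⁻¹ • y := by
  simp [inversion_def, dist_eq_norm, inv_pow]

lemma norm_inv_norm_sq_smul (y : E) : ‖(‖y‖ ^ 2)⁻¹ • y‖ = ‖y‖⁻¹ := by
  rcases eq_or_ne y 0 with rfl | hy
  · simp
  rw [norm_smul, norm_inv, norm_pow, norm_norm]
  field_simp [norm_ne_zero_iff.2 hy]

lemma norm_inv_norm_sq_smul_sub {x y : E} (hx : x ≠ 0) (hy : y ≠ 0) :
    ‖(‖x‖ ^ 2)⁻¹ • x - (‖y‖ ^ 2)⁻¹ • y‖ = ‖x - y‖ / (‖x‖ * ‖y‖) := by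
  have := dist_div_norm_sq_smul hx hy 1
  simp only [one_div, inv_pow, one_pow, dist_eq_norm] at this
  rw [this, div_eq_inv_mul]

lemma log_one_add_norm_div_norm_sub_inv_norm_sq_smul {x y : E} (hx : x ≠ 0) (hy : y ≠ 0)
    (hxy : x ≠ y) :
    log ((1 + ‖(‖y‖ ^ 2)⁻¹ • y‖) / ‖(‖x‖ ^ 2)⁻¹ • x - (‖y‖ ^ 2)⁻¹ • y‖)
      = log ((1 + ‖y‖) / ‖x - y‖) + log ‖x‖ := by
  have hx' : ‖x‖ ≠ 0 := norm_ne_zero_iff.2 hx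
  have hy' : ‖y‖ ≠ 0 := norm_ne_zero_iff.2 hy
  have hxy' : ‖x - y‖ ≠ 0 := norm_ne_zero_iff.2 (sub_ne_zero.2 hxy)
  rw [norm_inv_norm_sq_smul, norm_inv_norm_sq_smul_sub hx hy, ← log_mul (by positivity) hx']
  congr 1
  field_simp
  ring

lemma log_kernel_mul_exp_inversion (u : E → ℝ) (n : ℕ) {x y : E} (hx : x ≠ 0) (hy : y ≠ 0)
    (hxy : x ≠ y) :
    log ((1 + ‖y‖) / ‖x - y‖) * exp (n * (u ((‖y‖ ^ 2)⁻¹ • y) - 2 * log ‖y‖))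
      = ((‖y‖ ^ 2)⁻¹) ^ n * ((log ((1 + ‖(‖y‖ ^ 2)⁻¹ • y‖) / ‖(‖x‖ ^ 2)⁻¹ • x - (‖y‖ ^ 2)⁻¹ • y‖)
          - log ‖x‖) * exp (n * u ((‖y‖ ^ 2)⁻¹ • y))) := by
  have hjac : exp (n * (2 * log ‖y‖)) = (‖y‖ ^ 2) ^ n := by
    rw [exp_nat_mul, ← exp_log (pow_pos (norm_pos_iff.2 hy) 2), log_pow]
    norm_num
  rw [log_one_add_norm_div_norm_sub_inv_norm_sq_smul hx hy hxy, mul_sub, exp_sub, hjac,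
    div_eq_mul_inv, ← inv_pow]
  ring

variable [FiniteDimensional ℝ E]

lemma abs_det_fderiv_inversion_zero_one {y : E} (hy : y ≠ 0) :
    |((1 / dist y 0) ^ 2 • ((ℝ ∙ (y - 0))ᗮ.reflection : E →L[ℝ] E)).det|
      = ((‖y‖ ^ 2)⁻¹) ^ finrank ℝ E := by
  rw [ContinuousLinearMap.det, ContinuousLinearMap.toLinearMap_smul, LinearMap.det_smul]
  erw [Submodule.det_reflection]
  rw [Submodule.orthogonal_orthogonal, sub_zero, finrank_span_singleton hy, dist_zero_right,
    abs_mul]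
  simp [one_div, inv_pow, ← pow_mul, mul_comm]

variable [MeasurableSpace E] [BorelSpace E] [Nontrivial E] (μ : Measure E) [μ.IsAddHaarMeasure]

theorem integral_eq_integral_inv_norm_sq_smul (g : E → ℝ) :
    ∫ z, g z ∂μ = ∫ y, ((‖y‖ ^ 2)⁻¹) ^ finrank ℝ E * g ((‖y‖ ^ 2)⁻¹ • y) ∂μ := by
  have hs : MeasurableSet ({0}ᶜ : Set E) := (measurableSet_singleton 0).compl
  have himage : inversion (0 : E) 1 '' {0}ᶜ = {0}ᶜ := by
    rw [Set.image_compl_eq (inversion_bijective (0 : E) one_ne_zero), Set.image_singleton,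
      inversion_self]
  calc ∫ z, g z ∂μ = ∫ z in inversion (0 : E) 1 '' {0}ᶜ, g z ∂μ := by
        rw [himage, restrict_compl_singleton]
    _ = ∫ y in {0}ᶜ, |((1 / dist y 0) ^ 2 • ((ℝ ∙ (y - 0))ᗮ.reflection : E →L[ℝ] E)).det| •
          g (inversion 0 1 y) ∂μ :=
        integral_image_eq_integral_abs_det_fderiv_smul μ hs
          (fun y hy => (hasFDerivAt_inversion hy).hasFDerivWithinAt)
          (inversion_injective (0 : E) one_ne_zero).injOn g
    _ = ∫ y in {0}ᶜ, ((‖y‖ ^ 2)⁻¹) ^ finrank ℝ E * g ((‖y‖ ^ 2)⁻¹ • y) ∂μ :=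
        setIntegral_congr_fun hs fun y hy => by
          rw [abs_det_fderiv_inversion_zero_one hy, inversion_zero_one, smul_eq_mul]
    _ = _ := by rw [restrict_compl_singleton]

end InnerProductSpace

theorem stmt_17_general {n : ℕ} (γ Λ : ℝ)
    (u : EuclideanSpace ℝ (Fin n) → ℝ)
    (hfint : Integrable (fun y : EuclideanSpace ℝ (Fin n) => Real.exp (n * u y)))
    (hΛ : ∫ y, Real.exp (n * u y) = Λ)
    (ub : EuclideanSpace ℝ (Fin n) → ℝ)
    (hub : ∀ x, ub x = u ((‖x‖ ^ 2)⁻¹ • x) - 2 * Real.log ‖x‖)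
    (vu vub : EuclideanSpace ℝ (Fin n) → ℝ)
    (hvu : ∀ x, vu x = (1 / γ) * ∫ y, Real.log ((1 + ‖y‖) / ‖x - y‖) * Real.exp (n * u y))
    (hvub : ∀ x, vub x = (1 / γ) * ∫ y, Real.log ((1 + ‖y‖) / ‖x - y‖) * Real.exp (n * ub y))
    (hint1 : ∀ x : EuclideanSpace ℝ (Fin n), x ≠ 0 →
      Integrable (fun y : EuclideanSpace ℝ (Fin n) =>
        Real.log ((1 + ‖y‖) / ‖x - y‖) * Real.exp (n * u y))) :
    ∀ x : EuclideanSpace ℝ (Fin n), x ≠ 0 →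
      vub x = vu ((‖x‖ ^ 2)⁻¹ • x) - (Λ / γ) * Real.log ‖x‖ := by
  intro x hx
  have : Nontrivial (EuclideanSpace ℝ (Fin n)) := nontrivial_of_ne x 0 hx
  set x' := (‖x‖ ^ 2)⁻¹ • x
  have hx' : x' ≠ 0 := by simpa [x'] using hx
  set g := fun z : EuclideanSpace ℝ (Fin n) =>
    (log ((1 + ‖z‖) / ‖x' - z‖) - log ‖x‖) * exp (n * u z)
  have hkernel : (fun y => log ((1 + ‖y‖) / ‖x - y‖) * exp (n * ub y)) =ᵐ[volume]
      fun y => ((‖y‖ ^ 2)⁻¹) ^ finrank ℝ (EuclideanSpace ℝ (Fin n)) * g ((‖y‖ ^ 2)⁻¹ • y) := by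
    filter_upwards [Measure.ae_ne volume 0, Measure.ae_ne volume x] with y hy hyx
    rw [hub, finrank_euclideanSpace_fin, log_kernel_mul_exp_inversion u n hx hy hyx.symm]
  have hsplit : ∫ z, g z = (∫ z, log ((1 + ‖z‖) / ‖x' - z‖) * exp (n * u z)) - log ‖x‖ * Λ := by
    simp only [g, sub_mul]
    rw [integral_sub (hint1 x' hx') (hfint.const_mul _), integral_const_mul, hΛ]
  rw [hvub, integral_congr_ae hkernel, ← integral_eq_integral_inv_norm_sq_smul, hsplit, hvu]
  ring

theorem stmt_17 {n : ℕ} (hn : 1 ≤ n) (γ Λ : ℝ) (hγ : 0 < γ)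
    (u : EuclideanSpace ℝ (Fin n) → ℝ) (hm : Measurable u)
    (hfint : Integrable (fun y : EuclideanSpace ℝ (Fin n) => Real.exp (n * u y)))
    (hΛ : ∫ y, Real.exp (n * u y) = Λ)
    (ub : EuclideanSpace ℝ (Fin n) → ℝ)
    (hub : ∀ x, ub x = u ((‖x‖ ^ 2)⁻¹ • x) - 2 * Real.log ‖x‖)
    (vu vub : EuclideanSpace ℝ (Fin n) → ℝ)
    (hvu : ∀ x, vu x = (1 / γ) * ∫ y, Real.log ((1 + ‖y‖) / ‖x - y‖) * Real.exp (n * u y))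
    (hvub : ∀ x, vub x = (1 / γ) * ∫ y, Real.log ((1 + ‖y‖) / ‖x - y‖) * Real.exp (n * ub y))
    (hint1 : ∀ x : EuclideanSpace ℝ (Fin n), x ≠ 0 →
      Integrable (fun y : EuclideanSpace ℝ (Fin n) =>
        Real.log ((1 + ‖y‖) / ‖x - y‖) * Real.exp (n * u y)))
    (hint2 : ∀ x : EuclideanSpace ℝ (Fin n), x ≠ 0 →
      Integrable (fun y : EuclideanSpace ℝ (Fin n) =>
        Real.log ((1 + ‖y‖) / ‖x - y‖) * Real.exp (n * ub y))) :
    ∀ x : EuclideanSpace ℝ (Fin n), x ≠ 0 →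
      vub x = vu ((‖x‖ ^ 2)⁻¹ • x) - (Λ / γ) * Real.log ‖x‖ :=
  stmt_17_general γ Λ u hfint hΛ ub hub vu vub hvu hvub hint1
end
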